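/- arXiv:2012.01967 — 3 statements merged into one kernel-verified Lean document; each statement's English description precedes it below -/
import Mathlib

section
/- Let X and D be persistence diagrams, let (D₀,…,D_n) be a greedy PD sketch of D, and let ε_i = d_H(flat(D_i) ∪ Δ, flat(D) ∪ Δ) be the i-th insertion radius. Then for every i, |d_B(X, D) − d_B(X, D_i)| ≤ ε_i. -/
open Metric

/-- The diagonal in the plane. -/
def diag : Set (ℝ × ℝ) := {p | p.1 = p.2}

/-- A persistence diagram: a finite multiset of points strictly above the diagonal
(the diagonal itself, with infinite multiplicity, is implicit). -/
structure PD where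
  pts : Multiset (ℝ × ℝ)
  above : ∀ p ∈ pts, p.1 < p.2

/-- The set of distinct off-diagonal points of a persistence diagram. -/
def PD.flat (A : PD) : Set (ℝ × ℝ) := {p | p ∈ A.pts}

/-- A (partial, multiplicity-aware) matching between persistence diagrams. -/
structure PDMatching (A B : PD) where
  pairs : Multiset ((ℝ × ℝ) × (ℝ × ℝ))
  subA : pairs.map Prod.fst ≤ A.pts
  subB : pairs.map Prod.snd ≤ B.pts

/-- Bottleneck cost of a matching: max over matched pairs of their distance, and over
unmatched off-diagonal points of their distance to the diagonal. -/
noncomputable def PDMatching.cost {A B : PD} (M : PDMatching A B) : ℝ :=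
  ((M.pairs.map fun pq => dist pq.1 pq.2) +
      (((A.pts - M.pairs.map Prod.fst) + (B.pts - M.pairs.map Prod.snd)).map
        fun q => infDist q diag)).fold max 0

/-- Bottleneck distance between persistence diagrams. -/
noncomputable def bottleneckDist (A B : PD) : ℝ :=
  sInf {c | ∃ M : PDMatching A B, M.cost = c}

/-- `q` is a nearest point to `b` in the set `S`. -/
def isNearest (S : Set (ℝ × ℝ)) (b q : ℝ × ℝ) : Prop :=
  q ∈ S ∧ ∀ r ∈ S, dist b q ≤ dist b r

/-- The natural reweighting determined by a nearest-point assignment `NN`: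
each point `a` gets multiplicity equal to the number of points `b` of `B`
(with multiplicity) with `NN b = a`; mass sent to the diagonal is dropped. -/
noncomputable def naturalReweighting (B : PD) (NN : ℝ × ℝ → ℝ × ℝ) : PD where
  pts := (B.pts.map NN).filter fun q => q.1 < q.2
  above := fun p hp => (Multiset.mem_filter.mp hp).2

/-- The set `{p_j : j < i}` of the first `i` points of an ordering. -/
def prefixSet {n : ℕ} (p : Fin n → ℝ × ℝ) (i : ℕ) : Set (ℝ × ℝ) :=
  {x | ∃ j : Fin n, (j : ℕ) < i ∧ p j = x}

/-- A greedy ordering of the distinct off-diagonal points of a persistence diagram `D`,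
together with, for each prefix, a fixed nearest-point assignment used to form the
natural reweightings.  `S_i = prefixSet p i ∪ Δ`. -/
structure GreedySketch (D : PD) (n : ℕ) where
  p : Fin n → ℝ × ℝ
  inj : Function.Injective p
  range_eq : Set.range p = D.flat
  greedy : ∀ i : Fin n,
    infDist (p i) (prefixSet p i ∪ diag) =
      hausdorffDist (prefixSet p i ∪ diag) (D.flat ∪ diag)
  NN : ℕ → ℝ × ℝ → ℝ × ℝ
  NN_nearest : ∀ i ≤ n, ∀ b ∈ D.pts, isNearest (prefixSet p i ∪ diag) b (NN i b)

/-- The `i`-th diagram `D_i` of the greedy PD sketch: the natural reweighting, with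
respect to `D`, of the `i`-th prefix. -/
noncomputable def GreedySketch.approx {D : PD} {n : ℕ} (G : GreedySketch D n) (i : ℕ) : PD :=
  naturalReweighting D (G.NN i)

/-- The `i`-th insertion radius `ε_i = d_H(S_i, flat D ∪ Δ)`. -/
noncomputable def GreedySketch.eps {D : PD} {n : ℕ} (G : GreedySketch D n) (i : ℕ) : ℝ :=
  hausdorffDist (prefixSet G.p i ∪ diag) (D.flat ∪ diag)

/-!
Send every point `b` of `D` to its chosen nearest point `f b` in `S_i`. As `S_i` contains
`flat D_i ∪ Δ`, this moves `b` by at most `ε = d_H(flat D_i ∪ Δ, flat D ∪ Δ)`, and `D_i` is the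
image of `D` under `f` with the points landing on `Δ` dropped. A matching of `X` with `D` pushes
forward along `f` to a matching with `D_i` (pairs whose image lands on `Δ` become unmatched), and
a matching with `D_i` lifts back to one with `D`, because the multiplicity of a point of `D_i`
counts its preimages. By the triangle inequality, and because the distance to `Δ` is 1-Lipschitz,
every term of the bottleneck cost grows by at most `ε` in either direction.
-/
namespace Multiset

theorem fold_max_le_iff {α : Type*} [LinearOrder α] {s : Multiset α} {b c : α} :
    s.fold max b ≤ c ↔ b ≤ c ∧ ∀ x ∈ s, x ≤ c := by
  induction s using Multiset.induction_on with
  | empty => simp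
  | cons a s ih =>
    simp only [fold_cons_left, max_le_iff, ih, mem_cons, forall_eq_or_imp]
    tauto

theorem exists_lift_of_map_snd_le_map {α β γ : Type*} (f : β → α) {P : Multiset (γ × α)}
    {t : Multiset β} (h : P.map Prod.snd ≤ t.map f) :
    ∃ Q : Multiset (γ × β), Q.map Prod.snd ≤ t ∧ Q.map (Prod.map id f) = P := by
  induction P using Multiset.induction_on generalizing t with
  | empty => exact ⟨0, zero_le _, rfl⟩
  | cons pq P ih =>
    obtain ⟨b, hb, hfb⟩ := mem_map.1 (mem_of_le h (mem_map_of_mem _ (mem_cons_self pq P)))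
    obtain ⟨t, rfl⟩ := exists_cons_of_mem hb
    rw [map_cons, map_cons, ← hfb, cons_le_cons_iff] at h
    obtain ⟨Q, hQt, rfl⟩ := ih h
    exact ⟨(pq.1, b) ::ₘ Q, by simpa using hQt, by simp [hfb]⟩

theorem filter_map_sub_filter_map {α β : Type*} [DecidableEq α] [DecidableEq β] (f : α → β)
    (p : β → Prop) [DecidablePred p] {s t : Multiset α} (h : s ≤ t) :
    (t.map f).filter p - (s.map f).filter p = ((t - s).map f).filter p := by
  conv_lhs => rw [← tsub_add_cancel_of_le h]
  rw [map_add, filter_add, add_tsub_cancel_right]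

theorem map_snd_filter_map_prodMap {α β γ : Type*} (P : Multiset (γ × α)) (f : α → β)
    (p : β → Prop) [DecidablePred p] :
    ((P.map (Prod.map id f)).filter fun pq => p pq.2).map Prod.snd =
      ((P.map Prod.snd).map f).filter p := by
  simp [filter_map, map_map]

theorem map_fst_filter_map_prodMap {α β γ : Type*} (P : Multiset (γ × α)) (f : α → β)
    (p : β → Prop) [DecidablePred p] :
    ((P.map (Prod.map id f)).filter fun pq => p pq.2).map Prod.fst =
      (P.filter fun pq => p (f pq.2)).map Prod.fst := by
  simp [filter_map, map_map]

theorem sub_map_filter_le {α β : Type*} [DecidableEq β] (t : Multiset β)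
    (s : Multiset α) (g : α → β) (p : α → Prop) [DecidablePred p] :
    t - (s.filter p).map g ≤ (t - s.map g) + (s.filter fun a => ¬p a).map g := by
  nth_rw 2 [← filter_add_not p s]
  rw [map_add, tsub_add_eq_tsub_tsub]
  exact le_tsub_add

end Multiset

theorem Metric.hausdorffEDist_union_ne_top {α : Type*} [PseudoMetricSpace α] {s t u : Set α}
    (hs : Bornology.IsBounded s) (ht : Bornology.IsBounded t) (hu : u.Nonempty) :
    hausdorffEDist (s ∪ u) (t ∪ u) ≠ ⊤ := by
  obtain ⟨y, hy⟩ := hu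
  obtain ⟨R, hR⟩ := (isBounded_iff_subset_closedBall y).1 (hs.union ht)
  have hinf : ∀ v w, v ⊆ s ∪ t → ∀ x ∈ v ∪ u, infEDist x (w ∪ u) ≤ ENNReal.ofReal R := by
    rintro v w hv x (hx | hx)
    · calc infEDist x (w ∪ u) ≤ edist x y := infEDist_le_edist_of_mem (Or.inr hy)
        _ ≤ ENNReal.ofReal R := by
          rw [edist_dist]; exact ENNReal.ofReal_le_ofReal (mem_closedBall.1 (hR (hv hx)))
    · simp [infEDist_zero_of_mem (Set.mem_union_right w hx)]
  exact ne_top_of_le_ne_top ENNReal.ofReal_ne_top <| hausdorffEDist_le_of_infEDist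
    (hinf s t Set.subset_union_left) (hinf t s Set.subset_union_right)

namespace PDMatching

variable {A B : PD} (M : PDMatching A B)

theorem cost_le_iff {c : ℝ} :
    M.cost ≤ c ↔ 0 ≤ c ∧ (∀ pq ∈ M.pairs, dist pq.1 pq.2 ≤ c) ∧
      (∀ q ∈ A.pts - M.pairs.map Prod.fst, infDist q diag ≤ c) ∧
      ∀ q ∈ B.pts - M.pairs.map Prod.snd, infDist q diag ≤ c := by
  simp only [cost, Multiset.fold_max_le_iff, Multiset.mem_add, Multiset.forall_mem_map_iff,
    or_imp, forall_and]

theorem cost_nonneg : 0 ≤ M.cost :=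
  ((M.cost_le_iff).1 le_rfl).1

theorem dist_le_cost {pq : (ℝ × ℝ) × (ℝ × ℝ)} (h : pq ∈ M.pairs) : dist pq.1 pq.2 ≤ M.cost :=
  ((M.cost_le_iff).1 le_rfl).2.1 pq h

theorem infDist_le_cost_of_mem_left {q : ℝ × ℝ} (h : q ∈ A.pts - M.pairs.map Prod.fst) :
    infDist q diag ≤ M.cost :=
  ((M.cost_le_iff).1 le_rfl).2.2.1 q h

theorem infDist_le_cost_of_mem_right {q : ℝ × ℝ} (h : q ∈ B.pts - M.pairs.map Prod.snd) :
    infDist q diag ≤ M.cost :=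
  ((M.cost_le_iff).1 le_rfl).2.2.2 q h

end PDMatching

theorem bottleneckDist_le_cost {A B : PD} (M : PDMatching A B) : bottleneckDist A B ≤ M.cost :=
  csInf_le ⟨0, by rintro _ ⟨M', rfl⟩; exact M'.cost_nonneg⟩ ⟨M, rfl⟩

theorem bottleneckDist_le_add_of_forall_exists_cost_le {X A B : PD} {ε : ℝ}
    (h : ∀ M : PDMatching X A, ∃ M' : PDMatching X B, M'.cost ≤ M.cost + ε) :
    bottleneckDist X B ≤ bottleneckDist X A + ε := by
  rw [← sub_le_iff_le_add]
  refine le_csInf ⟨_, ⟨0, Multiset.zero_le _, Multiset.zero_le _⟩, rfl⟩ ?_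
  rintro _ ⟨M, rfl⟩
  obtain ⟨M', hM'⟩ := h M
  linarith [bottleneckDist_le_cost M']

theorem naturalReweighting_flat_subset (B : PD) (f : ℝ × ℝ → ℝ × ℝ) :
    (naturalReweighting B f).flat ⊆ f '' B.flat := fun _ hq =>
  Multiset.mem_map.1 (Multiset.mem_filter.1 hq).1

theorem naturalReweighting_pts_sub {B : PD} {f : ℝ × ℝ → ℝ × ℝ} {s : Multiset (ℝ × ℝ)}
    (hs : s ≤ B.pts) :
    (naturalReweighting B f).pts - (s.map f).filter (fun q => q.1 < q.2) =
      ((B.pts - s).map f).filter fun q => q.1 < q.2 :=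
  Multiset.filter_map_sub_filter_map f _ hs

theorem PDMatching.exists_lift_naturalReweighting {X B : PD} {f : ℝ × ℝ → ℝ × ℝ} {ε : ℝ}
    (hε : 0 ≤ ε) (hdist : ∀ b ∈ B.pts, dist b (f b) ≤ ε)
    (hdiag : ∀ b ∈ B.pts, (f b).1 ≤ (f b).2) (M : PDMatching X (naturalReweighting B f)) :
    ∃ M' : PDMatching X B, M'.cost ≤ M.cost + ε := by
  obtain ⟨Q, hQB, hQM⟩ := Multiset.exists_lift_of_map_snd_le_map f
    (M.subB.trans (Multiset.filter_le _ _))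
  have hfst : M.pairs.map Prod.fst = Q.map Prod.fst := by
    simp [← hQM, Multiset.map_map]
  have hsnd : M.pairs.map Prod.snd = (Q.map Prod.snd).map f := by
    simp [← hQM, Multiset.map_map]
  have hunmatched : (naturalReweighting B f).pts - (Q.map Prod.snd).map f =
      ((B.pts - Q.map Prod.snd).map f).filter fun q => q.1 < q.2 := by
    rw [← naturalReweighting_pts_sub hQB, Multiset.filter_eq_self.2]
    intro q hq
    exact (naturalReweighting B f).above q (Multiset.mem_of_le M.subB (hsnd ▸ hq))
  refine ⟨⟨Q, hfst ▸ M.subA, hQB⟩, (PDMatching.cost_le_iff _).2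
    ⟨add_nonneg M.cost_nonneg hε, ?_, ?_, ?_⟩⟩
  · rintro ⟨x, b⟩ hxb
    have hb : b ∈ B.pts := Multiset.mem_of_le hQB (Multiset.mem_map_of_mem Prod.snd hxb)
    have hM := M.dist_le_cost (hQM ▸ Multiset.mem_map_of_mem (Prod.map id f) hxb)
    calc dist x b ≤ dist x (f b) + dist b (f b) := dist_triangle_right _ _ _
      _ ≤ M.cost + ε := add_le_add hM (hdist b hb)
  · intro q hq
    exact (M.infDist_le_cost_of_mem_left (hfst ▸ hq)).trans (le_add_of_nonneg_right hε)
  · intro b hb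
    have hbB : b ∈ B.pts := Multiset.mem_of_le tsub_le_self hb
    rcases (hdiag b hbB).lt_or_eq with hoff | hon
    · have hM := M.infDist_le_cost_of_mem_right (hsnd ▸ hunmatched ▸
        Multiset.mem_filter.2 ⟨Multiset.mem_map_of_mem f hb, hoff⟩)
      linarith [infDist_le_infDist_add_dist (x := b) (y := f b) (s := diag), hdist b hbB]
    · linarith [infDist_le_dist_of_mem (x := b) (s := diag) hon, hdist b hbB, M.cost_nonneg]

noncomputable def PDMatching.pushforward {X B : PD} (M : PDMatching X B) (f : ℝ × ℝ → ℝ × ℝ) :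
    PDMatching X (naturalReweighting B f) where
  pairs := (M.pairs.map (Prod.map id f)).filter fun pq => pq.2.1 < pq.2.2
  subA := (Multiset.map_fst_filter_map_prodMap M.pairs f (fun q => q.1 < q.2)).trans_le
    ((Multiset.map_le_map (Multiset.filter_le _ _)).trans M.subA)
  subB := (Multiset.map_snd_filter_map_prodMap M.pairs f (fun q => q.1 < q.2)).trans_le
    (Multiset.filter_le_filter _ (Multiset.map_le_map M.subB))

theorem PDMatching.cost_pushforward_le {X B : PD} {f : ℝ × ℝ → ℝ × ℝ} {ε : ℝ}
    (hε : 0 ≤ ε) (hdist : ∀ b ∈ B.pts, dist b (f b) ≤ ε)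
    (hdiag : ∀ b ∈ B.pts, (f b).1 ≤ (f b).2) (M : PDMatching X B) :
    (M.pushforward f).cost ≤ M.cost + ε := by
  have hB : ∀ pq ∈ M.pairs, pq.2 ∈ B.pts := fun pq h =>
    Multiset.mem_of_le M.subB (Multiset.mem_map_of_mem _ h)
  refine (PDMatching.cost_le_iff _).2 ⟨add_nonneg M.cost_nonneg hε, ?_, ?_, ?_⟩
  · intro pq hpq
    obtain ⟨⟨x, b⟩, hxb, rfl⟩ := Multiset.mem_map.1 (Multiset.mem_filter.1 hpq).1
    calc dist x (f b) ≤ dist x b + dist b (f b) := dist_triangle _ _ _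
      _ ≤ M.cost + ε := add_le_add (M.dist_le_cost hxb) (hdist b (hB _ hxb))
  · intro x hx
    rw [PDMatching.pushforward, Multiset.map_fst_filter_map_prodMap M.pairs f (fun q => q.1 < q.2)]
      at hx
    rcases Multiset.mem_add.1 (Multiset.mem_of_le (Multiset.sub_map_filter_le _ _ _ _) hx)
      with hx | hx
    · exact (M.infDist_le_cost_of_mem_left hx).trans (le_add_of_nonneg_right hε)
    · obtain ⟨⟨x, b⟩, hxb, rfl⟩ := Multiset.mem_map.1 hx
      obtain ⟨hxb, hdropped⟩ := Multiset.mem_filter.1 hxb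
      have hb := hB _ hxb
      calc infDist x diag ≤ dist x (f b) :=
            infDist_le_dist_of_mem ((hdiag b hb).eq_of_not_lt hdropped)
        _ ≤ dist x b + dist b (f b) := dist_triangle _ _ _
        _ ≤ M.cost + ε := add_le_add (M.dist_le_cost hxb) (hdist b hb)
  · intro q hq
    rw [PDMatching.pushforward, Multiset.map_snd_filter_map_prodMap M.pairs f (fun q => q.1 < q.2),
      naturalReweighting_pts_sub M.subB] at hq
    obtain ⟨b, hb, rfl⟩ := Multiset.mem_map.1 (Multiset.mem_filter.1 hq).1
    calc infDist (f b) diag ≤ infDist b diag + dist (f b) b := infDist_le_infDist_add_dist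
      _ ≤ M.cost + ε := by
        rw [dist_comm]
        exact add_le_add (M.infDist_le_cost_of_mem_right hb)
          (hdist b (Multiset.mem_of_le tsub_le_self hb))

theorem abs_bottleneckDist_sub_naturalReweighting_le {X B : PD} {f : ℝ × ℝ → ℝ × ℝ} {ε : ℝ}
    (hε : 0 ≤ ε) (hdist : ∀ b ∈ B.pts, dist b (f b) ≤ ε)
    (hdiag : ∀ b ∈ B.pts, (f b).1 ≤ (f b).2) :
    |bottleneckDist X B - bottleneckDist X (naturalReweighting B f)| ≤ ε := by
  have hlift := bottleneckDist_le_add_of_forall_exists_cost_le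
    (PDMatching.exists_lift_naturalReweighting hε hdist hdiag (X := X))
  have hpush := bottleneckDist_le_add_of_forall_exists_cost_le fun M : PDMatching X B =>
    ⟨M.pushforward f, M.cost_pushforward_le hε hdist hdiag⟩
  exact abs_sub_le_iff.2 ⟨by linarith, by linarith⟩

theorem isNearest.dist_le_infDist {S T : Set (ℝ × ℝ)} {b q : ℝ × ℝ} (h : isNearest S b q)
    (hTS : T ⊆ S) (hT : T.Nonempty) : dist b q ≤ infDist b T :=
  not_lt.1 fun hlt =>
    let ⟨r, hr, hbr⟩ := (infDist_lt_iff hT).1 hlt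
    (h.2 r (hTS hr)).not_gt hbr

theorem diag_nonempty : diag.Nonempty :=
  ⟨(0, 0), rfl⟩

theorem PD.flat_finite (A : PD) : A.flat.Finite :=
  A.pts.finite_toSet

namespace GreedySketch

variable {D : PD} {n : ℕ} (G : GreedySketch D n) {i : ℕ}

theorem prefixSet_subset_flat (i : ℕ) : prefixSet G.p i ⊆ D.flat := by
  rintro _ ⟨j, -, rfl⟩
  rw [← G.range_eq]
  exact Set.mem_range_self j

theorem NN_fst_le_snd (hi : i ≤ n) {b : ℝ × ℝ} (hb : b ∈ D.pts) :
    (G.NN i b).1 ≤ (G.NN i b).2 := by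
  rcases (G.NN_nearest i hi b hb).1 with hp | hd
  · exact (D.above _ (G.prefixSet_subset_flat i hp)).le
  · exact hd.le

theorem flat_approx_union_diag_subset (hi : i ≤ n) :
    (G.approx i).flat ∪ diag ⊆ prefixSet G.p i ∪ diag := by
  rintro _ (hq | hq)
  · obtain ⟨b, hb, rfl⟩ := naturalReweighting_flat_subset D (G.NN i) hq
    exact (G.NN_nearest i hi b hb).1
  · exact Or.inr hq

theorem dist_NN_le_hausdorffDist (hi : i ≤ n) {b : ℝ × ℝ} (hb : b ∈ D.pts) :
    dist b (G.NN i b) ≤ hausdorffDist ((G.approx i).flat ∪ diag) (D.flat ∪ diag) := by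
  rw [hausdorffDist_comm]
  calc dist b (G.NN i b) ≤ infDist b ((G.approx i).flat ∪ diag) :=
        (G.NN_nearest i hi b hb).dist_le_infDist (G.flat_approx_union_diag_subset hi)
          (diag_nonempty.mono Set.subset_union_right)
    _ ≤ _ := infDist_le_hausdorffDist_of_mem (Or.inl hb) <| hausdorffEDist_union_ne_top
        D.flat_finite.isBounded (G.approx i).flat_finite.isBounded diag_nonempty

end GreedySketch

theorem greedy_sketch_error_bound_general
    (X D : PD) (n : ℕ) (G : GreedySketch D n)
    (i : ℕ) (hi : i ≤ n) :
    |bottleneckDist X D - bottleneckDist X (G.approx i)| ≤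
      hausdorffDist ((G.approx i).flat ∪ diag) (D.flat ∪ diag) :=
  abs_bottleneckDist_sub_naturalReweighting_le hausdorffDist_nonneg
    (fun _ hb => G.dist_NN_le_hausdorffDist hi hb) (fun _ hb => G.NN_fst_le_snd hi hb)

/-- Using `D_i` instead of `D` changes the bottleneck distance to any diagram `X`
by at most `ε_i = d_H(flat D_i ∪ Δ, flat D ∪ Δ)`. -/
theorem greedy_sketch_error_bound
    (X D : PD) (n : ℕ) (hn : D.pts.toFinset.card = n) (G : GreedySketch D n)
    (i : ℕ) (hi : i ≤ n) :
    |bottleneckDist X D - bottleneckDist X (G.approx i)| ≤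
      hausdorffDist ((G.approx i).flat ∪ diag) (D.flat ∪ diag) :=
  greedy_sketch_error_bound_general X D n G i hi
end

section
/- Let (D₀,…,D_n) be a greedy PD sketch of a persistence diagram D, with greedy ordering p₀,…,p_{n−1} and insertion radii ε_i. For each i, let T_i be the transportation plan from D_{i+1} to D_i in which, for q ∈ flat(D_i) ∪ {Δ}, T_i(q, p_i) is the number of points x of D (with multiplicity) whose fixed nearest point in S_{i+1} is p_i and whose fixed nearest point in S_i is q. Then every q with T_i(q, p_i) > 0 satisfies dist(q, p_i) ≤ 2ε_i, the off-diagonal such q are pairwise at ℓ∞ distance at least ε_i, and the number of q ∈ flat(D_i) ∪ {Δ} with T_i(q, p_i) > 0 is at most 25. -/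
open Metric

/-! ### Auxiliary lemmas -/

lemma diag_nonempty_s6 : Set.Nonempty diag := ⟨(0, 0), rfl⟩

lemma isClosed_diag : IsClosed diag := isClosed_eq continuous_fst continuous_snd

lemma le_infDist' {s : Set (ℝ × ℝ)} (hs : s.Nonempty) {x : ℝ × ℝ} {b : ℝ}
    (h : ∀ y ∈ s, b ≤ dist x y) : b ≤ infDist x s := by
  by_contra hlt
  push_neg at hlt
  obtain ⟨y, hy, hd⟩ := (infDist_lt_iff hs).mp hlt
  exact absurd hd (not_lt.mpr (h y hy))

lemma mid_mem_diag (x : ℝ × ℝ) : ((x.1 + x.2) / 2, (x.1 + x.2) / 2) ∈ diag := rfl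

lemma dist_mid (x : ℝ × ℝ) (h : x.1 ≤ x.2) :
    dist x ((x.1 + x.2) / 2, (x.1 + x.2) / 2) = (x.2 - x.1) / 2 := by
  rw [Prod.dist_eq, Real.dist_eq, Real.dist_eq]
  rw [abs_of_nonpos (by simp; linarith), abs_of_nonneg (by simp; linarith)]
  rw [max_def]
  split <;> linarith

lemma le_dist_diag (x : ℝ × ℝ) {t : ℝ × ℝ} (ht : t ∈ diag) :
    (x.2 - x.1) / 2 ≤ dist x t := by
  have h1 : x.1 - t.1 ≤ |x.1 - t.1| := le_abs_self _
  have h1' : -(x.1 - t.1) ≤ |x.1 - t.1| := neg_le_abs _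
  have h2 : x.2 - t.2 ≤ |x.2 - t.2| := le_abs_self _
  have hd : dist x t = max |x.1 - t.1| |x.2 - t.2| := by
    rw [Prod.dist_eq, Real.dist_eq, Real.dist_eq]
  have hm1 : |x.1 - t.1| ≤ dist x t := by rw [hd]; exact le_max_left _ _
  have hm2 : |x.2 - t.2| ≤ dist x t := by rw [hd]; exact le_max_right _ _
  have ht' : t.1 = t.2 := ht
  linarith

lemma infDist_diag_le (x : ℝ × ℝ) (h : x.1 ≤ x.2) :
    infDist x diag ≤ (x.2 - x.1) / 2 := by
  calc infDist x diag ≤ dist x ((x.1 + x.2) / 2, (x.1 + x.2) / 2) :=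
        infDist_le_dist_of_mem (mid_mem_diag x)
    _ = (x.2 - x.1) / 2 := dist_mid x h

lemma le_infDist_diag (x : ℝ × ℝ) : (x.2 - x.1) / 2 ≤ infDist x diag :=
  le_infDist' diag_nonempty_s6 fun t ht => le_dist_diag x ht

/-- The transportation plan `T_i` from `D_{i+1}` to `D_i` moves mass to the new point
`p_i` only from sources `q` (points of `flat D_i`, or the diagonal `Δ`) with
`dist(q, p_i) ≤ 2ε_i`; the off-diagonal sources are pairwise `ε_i`-separated; and
there are at most 25 sources (counting the diagonal as a single source). -/
theorem transport_plan_sparse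
    (D : PD) (n : ℕ) (hn : D.pts.toFinset.card = n) (G : GreedySketch D n)
    (i : ℕ) (hi : i < n) :
    -- `Q` is the set of sources `q` with `T_i(q, p_i) > 0`, where a diagonal
    -- source is recorded as the actual nearest diagonal point.
    ∀ Q : Set (ℝ × ℝ),
      Q = {q | ∃ x ∈ D.pts, G.NN (i + 1) x = G.p ⟨i, hi⟩ ∧ G.NN i x = q} →
      (∀ q ∈ Q \ diag, dist q (G.p ⟨i, hi⟩) ≤ 2 * G.eps i) ∧
      ((Q ∩ diag).Nonempty → infDist (G.p ⟨i, hi⟩) diag ≤ 2 * G.eps i) ∧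
      (∀ q ∈ Q \ diag, ∀ q' ∈ Q \ diag, q ≠ q' → G.eps i ≤ dist q q') ∧
      (Q \ diag).Finite ∧
      (Q \ diag).ncard ≤ 25 ∧
      ((Q ∩ diag).Nonempty → (Q \ diag).ncard + 1 ≤ 25) := by
  intro Q hQ
  set c : ℝ × ℝ := G.p ⟨i, hi⟩ with hc
  set ε : ℝ := G.eps i with hε
  -- basic set facts
  have hprefix_subset : ∀ k, prefixSet G.p k ∪ diag ⊆ D.flat ∪ diag := by
    intro k x hx
    rcases hx with hx | hx
    · obtain ⟨j, _, rfl⟩ := hx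
      left
      rw [← G.range_eq]
      exact ⟨j, rfl⟩
    · exact Or.inr hx
  have hSne : ∀ k, (prefixSet G.p k ∪ diag).Nonempty :=
    fun k => diag_nonempty_s6.mono Set.subset_union_right
  -- finiteness of Hausdorff edist
  have hfin : ∀ k, EMetric.hausdorffEdist (prefixSet G.p k ∪ diag) (D.flat ∪ diag) ≠ ⊤ := by
    intro k
    set r : ENNReal := D.pts.toFinset.sup
      (fun x => edist x ((x.1 + x.2) / 2, (x.1 + x.2) / 2)) with hr
    have hrtop : r < ⊤ := by
      rw [hr]
      exact (Finset.sup_lt_iff (by simp : (⊥ : ENNReal) < ⊤)).mpr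
        (fun x _ => edist_lt_top _ _)
    refine ne_top_of_le_ne_top hrtop.ne ?_
    apply EMetric.hausdorffEdist_le_of_mem_edist
    · intro x hx
      exact ⟨x, hprefix_subset k hx, by simp⟩
    · intro x hx
      rcases hx with hx | hx
      · refine ⟨((x.1 + x.2) / 2, (x.1 + x.2) / 2), Or.inr (mid_mem_diag x), ?_⟩
        rw [hr]
        exact Finset.le_sup (f := fun x : ℝ × ℝ => edist x ((x.1 + x.2) / 2, (x.1 + x.2) / 2))
          (Multiset.mem_toFinset.mpr hx)
      · exact ⟨x, Or.inr hx, by simp⟩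
  -- each point of D is within eps k of S_k
  have hinfle : ∀ k, ∀ x ∈ D.pts, infDist x (prefixSet G.p k ∪ diag) ≤ G.eps k := by
    intro k x hx
    have : infDist x (prefixSet G.p k ∪ diag) ≤
        hausdorffDist (D.flat ∪ diag) (prefixSet G.p k ∪ diag) :=
      infDist_le_hausdorffDist_of_mem (Or.inl hx)
        (by rw [EMetric.hausdorffEdist_comm]; exact hfin k)
    rwa [hausdorffDist_comm] at this
  -- NN gives the infimum distance
  have hNN : ∀ k ≤ n, ∀ x ∈ D.pts, dist x (G.NN k x) ≤ G.eps k := by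
    intro k hk x hx
    obtain ⟨hmem, hmin⟩ := G.NN_nearest k hk x hx
    calc dist x (G.NN k x) ≤ infDist x (prefixSet G.p k ∪ diag) :=
          le_infDist' (hSne k) hmin
      _ ≤ G.eps k := hinfle k x hx
  -- monotonicity of eps
  have heps_mono : ∀ k ≤ i, G.eps i ≤ G.eps k := by
    intro k hk
    have hk' : k ≤ n := le_trans hk (le_of_lt hi)
    apply hausdorffDist_le_of_mem_dist hausdorffDist_nonneg
    · intro x hx
      exact ⟨x, hprefix_subset i hx, by simp [hausdorffDist_nonneg]⟩
    · intro x hx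
      rcases hx with hx | hx
      · -- x ∈ D.flat
        refine ⟨G.NN k x, ?_, hNN k hk' x hx⟩
        have := (G.NN_nearest k hk' x hx).1
        rcases this with h | h
        · left
          obtain ⟨j, hj, hjx⟩ := h
          exact ⟨j, lt_of_lt_of_le hj hk, hjx⟩
        · exact Or.inr h
      · exact ⟨x, Or.inr hx, by simp [hausdorffDist_nonneg]⟩
  -- eps i = infDist(p_i, S_i)
  have hgreedy : infDist c (prefixSet G.p i ∪ diag) = ε := G.greedy ⟨i, hi⟩
  have hc_flat : c ∈ D.pts := by
    have : c ∈ Set.range G.p := ⟨⟨i, hi⟩, rfl⟩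
    rw [G.range_eq] at this
    exact this
  have hc_above : c.1 < c.2 := D.above c hc_flat
  -- S_i is closed
  have hclosed : ∀ k, IsClosed (prefixSet G.p k ∪ diag) := by
    intro k
    apply IsClosed.union _ isClosed_diag
    have : prefixSet G.p k ⊆ Set.range G.p := by
      rintro x ⟨j, _, rfl⟩; exact ⟨j, rfl⟩
    exact ((Set.finite_range G.p).subset this).isClosed
  -- eps i > 0
  have heps_pos : 0 < ε := by
    rcases lt_or_eq_of_le (infDist_nonneg (x := c) (s := prefixSet G.p i ∪ diag)) with h | h
    · rwa [hgreedy] at h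
    · exfalso
      have hmem : c ∈ prefixSet G.p i ∪ diag :=
        ((hclosed i).mem_iff_infDist_zero (hSne i)).mpr h.symm
      rcases hmem with h' | h'
      · obtain ⟨j, hj, hjc⟩ := h'
        have : j = ⟨i, hi⟩ := G.inj hjc
        rw [this] at hj
        exact absurd hj (lt_irrefl i)
      · exact absurd h' (by simp [diag]; exact ne_of_lt hc_above)
  -- key pointwise facts
  have hkey : ∀ q ∈ Q, q ∈ prefixSet G.p i ∪ diag ∧ dist q c ≤ 2 * ε := by
    intro q hq
    rw [hQ] at hq
    obtain ⟨x, hx, hx1, hx2⟩ := hq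
    have hn1 := G.NN_nearest (i + 1) (by omega) x hx
    have hn2 := G.NN_nearest i (by omega) x hx
    rw [hx1] at hn1
    rw [hx2] at hn2
    have hq_mem : q ∈ prefixSet G.p i ∪ diag := hn2.1
    have hq_mem' : q ∈ prefixSet G.p (i + 1) ∪ diag := by
      rcases hq_mem with h | h
      · exact Or.inl (by obtain ⟨j, hj, hjq⟩ := h; exact ⟨j, by omega, hjq⟩)
      · exact Or.inr h
    have hxq : dist x q ≤ ε := by
      rw [← hx2]
      exact hNN i (by omega) x hx
    have hxc : dist x c ≤ dist x q := hn1.2 q hq_mem'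
    refine ⟨hq_mem, ?_⟩
    calc dist q c ≤ dist q x + dist x c := dist_triangle _ _ _
      _ ≤ dist x q + dist x q := by rw [dist_comm q x]; linarith
      _ ≤ 2 * ε := by linarith
  -- part 1
  have part1 : ∀ q ∈ Q \ diag, dist q c ≤ 2 * ε := fun q hq => (hkey q hq.1).2
  -- part 2
  have part2 : (Q ∩ diag).Nonempty → infDist c diag ≤ 2 * ε := by
    rintro ⟨q, hqQ, hqd⟩
    calc infDist c diag ≤ dist c q := infDist_le_dist_of_mem hqd
      _ = dist q c := dist_comm c q
      _ ≤ 2 * ε := (hkey q hqQ).2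
  -- off-diagonal sources are prefix points
  have hoff : ∀ q ∈ Q \ diag, ∃ j : Fin n, (j : ℕ) < i ∧ G.p j = q := by
    intro q hq
    rcases (hkey q hq.1).1 with h | h
    · exact h
    · exact absurd h hq.2
  -- off-diagonal sources are far from diagonal
  have hfar : ∀ q ∈ Q \ diag, 2 * ε ≤ q.2 - q.1 := by
    intro q hq
    obtain ⟨j, hj, hjq⟩ := hoff q hq
    have hq_flat : q ∈ D.pts := by
      rw [← hjq, ← Set.mem_setOf_eq (p := fun p => p ∈ D.pts)]
      have : G.p j ∈ Set.range G.p := ⟨j, rfl⟩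
      rw [G.range_eq] at this; exact this
    have hq_ab : q.1 < q.2 := D.above q hq_flat
    have h1 : ε ≤ G.eps j := heps_mono j (le_of_lt hj)
    have h2 : G.eps j = infDist (G.p j) (prefixSet G.p (j : ℕ) ∪ diag) := (G.greedy j).symm
    have h3 : infDist (G.p j) (prefixSet G.p (j : ℕ) ∪ diag) ≤ infDist (G.p j) diag :=
      infDist_le_infDist_of_subset Set.subset_union_right diag_nonempty_s6
    have h4 : infDist (G.p j) diag ≤ ((G.p j).2 - (G.p j).1) / 2 :=
      infDist_diag_le _ (le_of_lt (by rw [hjq]; exact hq_ab))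
    rw [hjq] at h2 h3 h4
    linarith
  -- separation
  have hsep : ∀ q ∈ Q \ diag, ∀ q' ∈ Q \ diag, q ≠ q' → ε ≤ dist q q' := by
    have key : ∀ (j k : Fin n), (j : ℕ) < i → (k : ℕ) < i → (j : ℕ) < (k : ℕ) →
        ε ≤ dist (G.p j) (G.p k) := by
      intro j k hj hk hjk
      have h1 : ε ≤ G.eps k := heps_mono k (le_of_lt hk)
      have h2 : G.eps k = infDist (G.p k) (prefixSet G.p (k : ℕ) ∪ diag) := (G.greedy k).symm
      have h3 : infDist (G.p k) (prefixSet G.p (k : ℕ) ∪ diag) ≤ dist (G.p k) (G.p j) :=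
        infDist_le_dist_of_mem (Or.inl ⟨j, hjk, rfl⟩)
      rw [dist_comm]
      linarith
    intro q hq q' hq' hne
    obtain ⟨j, hj, hjq⟩ := hoff q hq
    obtain ⟨k, hk, hkq⟩ := hoff q' hq'
    rcases lt_trichotomy (j : ℕ) (k : ℕ) with h | h | h
    · rw [← hjq, ← hkq]; exact key j k hj hk h
    · exfalso; apply hne; rw [← hjq, ← hkq]; congr 1; exact Fin.ext h
    · rw [← hjq, ← hkq, dist_comm]; exact key k j hk hj h
  -- the grid map
  set f : ℝ × ℝ → ℤ × ℤ := fun q => (⌊(q.1 - c.1) / ε⌋, ⌊(q.2 - c.2) / ε⌋) with hf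
  have hcoord : ∀ q ∈ Q \ diag, |q.1 - c.1| ≤ 2 * ε ∧ |q.2 - c.2| ≤ 2 * ε := by
    intro q hq
    have := part1 q hq
    rw [Prod.dist_eq, Real.dist_eq, Real.dist_eq] at this
    exact ⟨le_trans (le_max_left _ _) this, le_trans (le_max_right _ _) this⟩
  have hbox : ∀ q ∈ Q \ diag, f q ∈ (Finset.Icc (-2 : ℤ) 2 ×ˢ Finset.Icc (-2 : ℤ) 2) := by
    intro q hq
    obtain ⟨h1, h2⟩ := hcoord q hq
    rw [abs_le] at h1 h2
    simp only [Finset.mem_product, Finset.mem_Icc]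
    constructor
    · constructor
      · have : (-2 : ℝ) ≤ (q.1 - c.1) / ε := by
          rw [le_div_iff₀ heps_pos]; linarith
        exact_mod_cast Int.le_floor.mpr (by exact_mod_cast this)
      · have h : (q.1 - c.1) / ε ≤ 2 := by rw [div_le_iff₀ heps_pos]; linarith
        calc ⌊(q.1 - c.1) / ε⌋ ≤ ⌊(2 : ℝ)⌋ := Int.floor_le_floor h
          _ = 2 := by norm_num
    · constructor
      · have : (-2 : ℝ) ≤ (q.2 - c.2) / ε := by
          rw [le_div_iff₀ heps_pos]; linarith
        exact_mod_cast Int.le_floor.mpr (by exact_mod_cast this)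
      · have h : (q.2 - c.2) / ε ≤ 2 := by rw [div_le_iff₀ heps_pos]; linarith
        calc ⌊(q.2 - c.2) / ε⌋ ≤ ⌊(2 : ℝ)⌋ := Int.floor_le_floor h
          _ = 2 := by norm_num
  have hinj : Set.InjOn f (Q \ diag) := by
    intro q hq q' hq' hfq
    by_contra hne
    have hsep' := hsep q hq q' hq' hne
    have habs : ∀ a b : ℝ, ⌊a / ε⌋ = ⌊b / ε⌋ → |a - b| < ε := by
      intro a b hab
      have h := Int.abs_sub_lt_one_of_floor_eq_floor hab
      rw [div_sub_div_same, abs_div, abs_of_pos heps_pos, div_lt_one heps_pos] at h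
      exact h
    have e1 : ⌊(q.1 - c.1) / ε⌋ = ⌊(q'.1 - c.1) / ε⌋ := congrArg Prod.fst hfq
    have e2 : ⌊(q.2 - c.2) / ε⌋ = ⌊(q'.2 - c.2) / ε⌋ := congrArg Prod.snd hfq
    have d1 := habs _ _ e1
    have d2 := habs _ _ e2
    have : dist q q' < ε := by
      rw [Prod.dist_eq, Real.dist_eq, Real.dist_eq]
      have : q.1 - q'.1 = (q.1 - c.1) - (q'.1 - c.1) := by ring
      rw [this]
      have h2' : q.2 - q'.2 = (q.2 - c.2) - (q'.2 - c.2) := by ring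
      rw [h2']
      exact max_lt d1 d2
    linarith
  have hfin_img : (f '' (Q \ diag)).Finite :=
    Set.Finite.subset (Finset.Icc (-2 : ℤ) 2 ×ˢ Finset.Icc (-2 : ℤ) 2).finite_toSet
      (by rintro _ ⟨q, hq, rfl⟩; exact hbox q hq)
  have hQfin : (Q \ diag).Finite := Set.Finite.of_finite_image hfin_img hinj
  have hcard25 : (Q \ diag).ncard ≤ 25 := by
    rw [← Set.ncard_image_of_injOn hinj]
    calc (f '' (Q \ diag)).ncard
        ≤ ((Finset.Icc (-2 : ℤ) 2 ×ˢ Finset.Icc (-2 : ℤ) 2 : Finset (ℤ × ℤ)) : Set (ℤ × ℤ)).ncard :=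
          Set.ncard_le_ncard (by rintro _ ⟨q, hq, rfl⟩; exact hbox q hq)
            (Finset.finite_toSet _)
      _ = 25 := by rw [Set.ncard_coe_finset]; decide
  refine ⟨part1, part2, hsep, hQfin, hcard25, ?_⟩
  -- diagonal case: exclude corner (2, -2)
  intro hdiag
  have hc_diag : c.2 - c.1 ≤ 4 * ε := by
    have h1 := part2 hdiag
    have h2 := le_infDist_diag c
    linarith
  have hcorner : ∀ q ∈ Q \ diag, f q ≠ (2, -2) := by
    intro q hq hfq
    have e1 : ⌊(q.1 - c.1) / ε⌋ = 2 := congrArg Prod.fst hfq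
    have e2 : ⌊(q.2 - c.2) / ε⌋ = -2 := congrArg Prod.snd hfq
    have h1 : (2 : ℝ) ≤ (q.1 - c.1) / ε := by
      have := Int.floor_le ((q.1 - c.1) / ε)
      rw [e1] at this; exact_mod_cast this
    have h2 : (q.2 - c.2) / ε < -1 := by
      have := Int.lt_floor_add_one ((q.2 - c.2) / ε)
      rw [e2] at this; push_cast at this; linarith
    have h1' : 2 * ε ≤ q.1 - c.1 := (le_div_iff₀ heps_pos).mp h1
    have h2' : q.2 - c.2 < -1 * ε := (div_lt_iff₀ heps_pos).mp h2
    have := hfar q hq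
    linarith
  have hcard24 : (Q \ diag).ncard ≤ 24 := by
    rw [← Set.ncard_image_of_injOn hinj]
    calc (f '' (Q \ diag)).ncard
        ≤ (((Finset.Icc (-2 : ℤ) 2 ×ˢ Finset.Icc (-2 : ℤ) 2).erase (2, -2) :
            Finset (ℤ × ℤ)) : Set (ℤ × ℤ)).ncard := by
          apply Set.ncard_le_ncard _ (Finset.finite_toSet _)
          rintro _ ⟨q, hq, rfl⟩
          simp only [Finset.coe_erase, Set.mem_diff, Set.mem_singleton_iff]
          exact ⟨hbox q hq, hcorner q hq⟩
      _ ≤ 24 := by rw [Set.ncard_coe_finset]; decide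
  omega
end

section
/- Let P = (p₀,…,p_{n−1}) ⊆ ℝ² be ordered by a greedy permutation with insertion radii λ₁ ≥ … ≥ λ_{n−1}, and let γ ≥ 0. In the γ-filtered neighborhood graph on P, every vertex p_j has at most (2γ+1)² neighbors p_i with i < j; consequently the graph has at most (2γ+1)²·n edges. -/
/-!
The insertion radii of a greedy permutation are non-increasing, so any two points inserted
before `p_j` are at distance at least `λ_j`. The neighbours `p_i`, `i < j`, of `p_j` thus form
a `λ_j`-separated set in the ℓ∞ ball of radius `γλ_j` around `p_j`. Cutting that square into a
grid of half-open cells of side `λ_j` puts at most one of them in each cell, and there are at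
most `(2γ + 1)²` cells.
-/

open Metric

/-- The insertion radius `λ_i = d(p_i, P_i)`. -/
noncomputable def insRad {n : ℕ} (p : Fin n → ℝ × ℝ) (i : Fin n) : ℝ :=
  infDist (p i) (prefixSet p i)

open Finset

/-- The `k` with `x ∈ [a + kδ, a + (k+1)δ)`; the truncating floor sends every `x < a` to `0`. -/
noncomputable def cellIndex (a δ x : ℝ) : ℕ := ⌊(x - a) / δ⌋₊

lemma cellIndex_lt {c r δ x : ℝ} (hδ : 0 < δ) (hx : x ∈ closedBall c r) :
    cellIndex (c - r) δ x < ⌊2 * r / δ⌋₊ + 1 := by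
  have hx' := abs_le.mp (mem_closedBall.mp hx)
  refine Nat.lt_succ_of_le (Nat.floor_le_floor ?_)
  gcongr
  linarith [hx'.2]

lemma dist_lt_of_cellIndex_eq {c r δ x y : ℝ} (hδ : 0 < δ) (hx : x ∈ closedBall c r)
    (hy : y ∈ closedBall c r) (h : cellIndex (c - r) δ x = cellIndex (c - r) δ y) :
    dist x y < δ := by
  have hx' := abs_le.mp (mem_closedBall.mp hx)
  have hy' := abs_le.mp (mem_closedBall.mp hy)
  have hfloor : ⌊(x - (c - r)) / δ⌋ = ⌊(y - (c - r)) / δ⌋ := by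
    rw [← Int.natCast_floor_eq_floor (div_nonneg (by linarith) hδ.le),
      ← Int.natCast_floor_eq_floor (div_nonneg (by linarith) hδ.le)]
    exact congrArg Nat.cast h
  have := Int.abs_sub_lt_one_of_floor_eq_floor hfloor
  rwa [← sub_div, sub_sub_sub_cancel_right, abs_div, abs_of_pos hδ, div_lt_one hδ] at this

theorem card_le_of_mem_closedBall_of_pairwise_le_dist {ι : Type*} (s : Finset ι)
    (f : ι → ℝ × ℝ) {c : ℝ × ℝ} {r δ : ℝ} (hδ : 0 < δ) (hf : ∀ i ∈ s, f i ∈ closedBall c r)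
    (hsep : (s : Set ι).Pairwise fun i k => δ ≤ dist (f i) (f k)) :
    (#s : ℝ) ≤ (2 * r / δ + 1) ^ 2 := by
  rcases s.eq_empty_or_nonempty with rfl | ⟨i, hi⟩
  · simp only [card_empty, Nat.cast_zero]
    positivity
  have hr : 0 ≤ r := dist_nonneg.trans (mem_closedBall.mp (hf i hi))
  have hcoord : ∀ k ∈ s, (f k).1 ∈ closedBall c.1 r ∧ (f k).2 ∈ closedBall c.2 r :=
    fun k hk => by simpa only [mem_closedBall, Prod.dist_eq, max_le_iff] using hf k hk
  set m := ⌊2 * r / δ⌋₊ + 1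
  have hcard : #s ≤ #(range m ×ˢ range m) := by
    refine card_le_card_of_injOn
      (fun k => (cellIndex (c.1 - r) δ (f k).1, cellIndex (c.2 - r) δ (f k).2)) ?_ ?_
    · intro k hk
      simp only [coe_product, coe_range, Set.mem_prod, Set.mem_Iio]
      exact ⟨cellIndex_lt hδ (hcoord k hk).1, cellIndex_lt hδ (hcoord k hk).2⟩
    · intro a ha b hb hab
      by_contra hne
      obtain ⟨hab₁, hab₂⟩ := Prod.mk.inj hab
      have hclose : dist (f a) (f b) < δ := by
        rw [Prod.dist_eq, max_lt_iff]
        exact ⟨dist_lt_of_cellIndex_eq hδ (hcoord a ha).1 (hcoord b hb).1 hab₁,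
          dist_lt_of_cellIndex_eq hδ (hcoord a ha).2 (hcoord b hb).2 hab₂⟩
      exact (hsep ha hb hne).not_gt hclose
  calc (#s : ℝ) ≤ (m : ℝ) ^ 2 := by
        rw [card_product, card_range] at hcard
        exact_mod_cast hcard.trans_eq (sq m).symm
    _ ≤ (2 * r / δ + 1) ^ 2 := by
        gcongr
        push_cast [m]
        gcongr
        exact Nat.floor_le (by positivity)

lemma card_filter_prod_eq_sum {α β : Type*} [Fintype α] [Fintype β] (r : α → β → Prop)
    [∀ a b, Decidable (r a b)] :
    #{e : α × β | r e.1 e.2} = ∑ b, #{a | r a b} := by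
  simp only [card_filter, Fintype.sum_prod_type_right]

section Greedy

variable {n : ℕ} {p : Fin n → ℝ × ℝ}

def IsGreedy (p : Fin n → ℝ × ℝ) : Prop :=
  ∀ i : Fin n, 0 < (i : ℕ) →
    infDist (p i) (prefixSet p i) = hausdorffDist (prefixSet p i) (Set.range p)

lemma mem_prefixSet (p : Fin n → ℝ × ℝ) {k : Fin n} {i : ℕ} (h : (k : ℕ) < i) :
    p k ∈ prefixSet p i :=
  ⟨k, h, rfl⟩

lemma prefixSet_mono (p : Fin n → ℝ × ℝ) : Monotone (prefixSet p) :=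
  fun _ _ hik _ ⟨l, hl, hx⟩ => ⟨l, hl.trans_le hik, hx⟩

lemma prefixSet_subset_range (p : Fin n → ℝ × ℝ) (i : ℕ) : prefixSet p i ⊆ Set.range p :=
  fun _ ⟨l, _, hx⟩ => ⟨l, hx⟩

lemma prefixSet_finite (p : Fin n → ℝ × ℝ) (i : ℕ) : (prefixSet p i).Finite :=
  (Set.finite_range p).subset (prefixSet_subset_range p i)

lemma insRad_le_dist_of_lt {i j : Fin n} (hij : i < j) : insRad p j ≤ dist (p j) (p i) :=
  infDist_le_dist_of_mem (mem_prefixSet p hij)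

lemma insRad_pos (hinj : Function.Injective p) {i j : Fin n} (hij : i < j) :
    0 < insRad p j := by
  refine ((prefixSet_finite p j).isClosed.notMem_iff_infDist_pos
    ⟨p i, mem_prefixSet p hij⟩).mp ?_
  rintro ⟨l, hl, hlj⟩
  exact hl.ne (congrArg Fin.val (hinj hlj))

lemma IsGreedy.insRad_anti (greedy : IsGreedy p) {k j : Fin n} (hk : 0 < (k : ℕ))
    (hkj : k ≤ j) : insRad p j ≤ insRad p k := by
  have hne : (prefixSet p k).Nonempty := ⟨p ⟨0, hk.trans k.isLt⟩, mem_prefixSet p hk⟩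
  have hfin : hausdorffEDist (Set.range p) (prefixSet p k) ≠ ⊤ :=
    hausdorffEDist_ne_top_of_nonempty_of_bounded ⟨p j, j, rfl⟩ hne
      (Set.finite_range p).isBounded (prefixSet_finite p k).isBounded
  calc insRad p j ≤ infDist (p j) (prefixSet p k) :=
        infDist_le_infDist_of_subset (prefixSet_mono p (Fin.le_iff_val_le_val.mp hkj)) hne
    _ ≤ hausdorffDist (Set.range p) (prefixSet p k) :=
        infDist_le_hausdorffDist_of_mem ⟨j, rfl⟩ hfin
    _ = insRad p k := by rw [hausdorffDist_comm, insRad, greedy k hk]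

lemma IsGreedy.insRad_le_dist (greedy : IsGreedy p) {i k j : Fin n} (hik : i < k)
    (hkj : k < j) : insRad p j ≤ dist (p i) (p k) :=
  calc insRad p j ≤ insRad p k := greedy.insRad_anti (Nat.zero_le _ |>.trans_lt hik) hkj.le
    _ ≤ dist (p i) (p k) := dist_comm (p i) (p k) ▸ insRad_le_dist_of_lt hik

lemma IsGreedy.card_neighbors_le (greedy : IsGreedy p) (hinj : Function.Injective p) (γ : ℝ)
    (j : Fin n) :
    (#{i | i < j ∧ dist (p i) (p j) ≤ γ * insRad p j} : ℝ) ≤ (2 * γ + 1) ^ 2 := by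
  set N : Finset (Fin n) := {i | i < j ∧ dist (p i) (p j) ≤ γ * insRad p j}
  rcases N.eq_empty_or_nonempty with hN | ⟨i, hi⟩
  · rw [hN, card_empty, Nat.cast_zero]
    positivity
  have hrad : 0 < insRad p j := insRad_pos hinj (mem_filter.mp hi).2.1
  have hsep : (N : Set (Fin n)).Pairwise fun a b => insRad p j ≤ dist (p a) (p b) := by
    intro a ha b hb hab
    have hbj := (mem_filter.mp hb).2.1
    have haj := (mem_filter.mp ha).2.1
    rcases hab.lt_or_gt with h | h
    · exact greedy.insRad_le_dist h hbj
    · exact dist_comm (p a) (p b) ▸ greedy.insRad_le_dist h haj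
  have hball : ∀ a ∈ N, p a ∈ closedBall (p j) (γ * insRad p j) :=
    fun a ha => mem_closedBall.mpr (mem_filter.mp ha).2.2
  calc (#N : ℝ) ≤ (2 * (γ * insRad p j) / insRad p j + 1) ^ 2 :=
        card_le_of_mem_closedBall_of_pairwise_le_dist N p hrad hball hsep
    _ = (2 * γ + 1) ^ 2 := by field_simp

end Greedy

theorem filtered_nbrhd_graph_sparse_general (n : ℕ) (p : Fin n → ℝ × ℝ)
    (hinj : Function.Injective p) (γ : ℝ)
    (greedy : ∀ i : Fin n, 0 < (i : ℕ) →
      infDist (p i) (prefixSet p i) = hausdorffDist (prefixSet p i) (Set.range p)) :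
    (∀ j : Fin n,
      ((Finset.univ.filter fun i : Fin n =>
          i < j ∧ dist (p i) (p j) ≤ γ * insRad p j).card : ℝ) ≤ (2 * γ + 1) ^ 2) ∧
    ((Finset.univ.filter fun e : Fin n × Fin n =>
        e.1 < e.2 ∧ dist (p e.1) (p e.2) ≤ γ * insRad p e.2).card : ℝ)
      ≤ (2 * γ + 1) ^ 2 * n := by
  have hnbr := IsGreedy.card_neighbors_le greedy hinj γ
  refine ⟨hnbr, ?_⟩
  rw [card_filter_prod_eq_sum (fun i j => i < j ∧ dist (p i) (p j) ≤ γ * insRad p j)]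
  push_cast
  calc _ ≤ ∑ _ : Fin n, (2 * γ + 1) ^ 2 := sum_le_sum fun j _ => hnbr j
    _ = (2 * γ + 1) ^ 2 * n := by simp [mul_comm]

/-- In the `γ`-filtered neighborhood graph on a greedily ordered set in the plane
(ℓ∞ metric), every vertex `p_j` has at most `(2γ+1)²` neighbors `p_i` with `i < j`;
consequently the graph has at most `(2γ+1)²·n` edges. -/
theorem filtered_nbrhd_graph_sparse (n : ℕ) (p : Fin n → ℝ × ℝ)
    (hinj : Function.Injective p) (γ : ℝ) (hγ : 0 ≤ γ)
    (greedy : ∀ i : Fin n, 0 < (i : ℕ) →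
      infDist (p i) (prefixSet p i) = hausdorffDist (prefixSet p i) (Set.range p)) :
    (∀ j : Fin n,
      ((Finset.univ.filter fun i : Fin n =>
          i < j ∧ dist (p i) (p j) ≤ γ * insRad p j).card : ℝ) ≤ (2 * γ + 1) ^ 2) ∧
    ((Finset.univ.filter fun e : Fin n × Fin n =>
        e.1 < e.2 ∧ dist (p e.1) (p e.2) ≤ γ * insRad p e.2).card : ℝ)
      ≤ (2 * γ + 1) ^ 2 * n :=
  filtered_nbrhd_graph_sparse_general n p hinj γ greedy
end
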